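/- arXiv:0907.3772 — 3 statements merged into one kernel-verified Lean document; each statement's English description precedes it below -/
import Mathlib

section
/- For positive integers y_1,…,y_k with sum equal to n-2, define F(y_1,…,y_k) = Σ_{i=1}^{k-1} (Σ_{j=1}^{i} y_j)(Σ_{j=i+1}^{k} y_j). Then the Wiener index of the caterpillar T(y_1,…,y_k) of order n (a path v_1,…,v_k with y_1 pendant vertices at v_1, y_k pendant vertices at v_k, and y_i−1 pendant vertices at v_i for 1<i<k) equals (n−1)^2 + F(y_1,…,y_k). -/
open Finset

/-- Wiener index: sum of distances over all unordered pairs of vertices. -/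
noncomputable def wienerIndex {V : Type*} [Fintype V] (G : SimpleGraph V) : ℕ :=
  (∑ u : V, ∑ v : V, G.dist u v) / 2

/-- The degree of a vertex. -/
noncomputable def degN {V : Type*} (G : SimpleGraph V) (v : V) : ℕ :=
  Nat.card {u : V | G.Adj v u}

/-- The multiset of vertex degrees of a graph. -/
noncomputable def degMs {V : Type*} [Fintype V] (G : SimpleGraph V) : Multiset ℕ :=
  Finset.univ.val.map (degN G)

/-- `IsCaterpillar G k y` : `G` is the caterpillar `T(y 0, …, y (k-1))`, i.e. there is a
spine path `v 0, …, v (k-1)` whose vertices have degrees `y i + 1`, and every vertex off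
the spine is a pendant leaf attached to the spine. -/
def IsCaterpillar {V : Type*} (G : SimpleGraph V) (k : ℕ) (y : ℕ → ℕ) : Prop :=
  ∃ v : ℕ → V,
    (∀ i j, i < k → j < k → v i = v j → i = j) ∧
    (∀ i, i + 1 < k → G.Adj (v i) (v (i + 1))) ∧
    (∀ i, i < k → degN G (v i) = y i + 1) ∧
    (∀ u : V, (∀ i, i < k → u ≠ v i) → degN G u = 1 ∧ ∃ i, i < k ∧ G.Adj u (v i))

/-- `F(y_1, …, y_k) = ∑_{i=1}^{k-1} (∑_{j≤i} y_j)(∑_{j>i} y_j)` (0-indexed). -/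
def Fseq (k : ℕ) (y : ℕ → ℕ) : ℕ :=
  ∑ i ∈ Finset.range (k - 1),
    (∑ j ∈ Finset.range (i + 1), y j) * (∑ j ∈ Finset.Ico (i + 1) k, y j)

/-!
Let `p` send every vertex to the index of the spine vertex it is, or hangs from. In the tree,
`d(u, w) = |p u - p w| + [u ∉ spine] + [w ∉ spine]` for `u ≠ w`, so `2 W` is
`∑_{u,w} |p u - p w| + 2 (n - 1)(n - k)`. A pair of vertices contributes to `|p u - p w|` once
for every spine edge `v_t v_{t+1}` separating them, so that sum is `2 ∑_t a_t (n - a_t)` with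
`a_t = #{u | p u ≤ t}`. Counting degrees, the fibre of `i` has `y_i + [i = 0] + [i = k - 1]`
vertices, hence `a_t = y_1 + ⋯ + y_{t+1} + 1` and `n - a_t = y_{t+2} + ⋯ + y_k + 1`. Finally
`(A + 1)(B + 1) = A B + n - 1` turns the total into `(n - 1)(n - k) + (k - 1)(n - 1) + F`.
-/

lemma natDist_eq_sum_range {K i j : ℕ} (hi : i ≤ K) (hj : j ≤ K) :
    Nat.dist i j = ∑ t ∈ range K,
      ((if i ≤ t then 1 else 0) * (if t < j then 1 else 0)
        + (if j ≤ t then 1 else 0) * (if t < i then 1 else 0)) := by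
  have hcount : ∀ a b, b ≤ K →
      ∑ t ∈ range K, (if a ≤ t then 1 else 0) * (if t < b then 1 else 0) = b - a := by
    intro a b hb
    simp only [ite_zero_mul_ite_zero, mul_one, sum_boole, Nat.cast_id]
    rw [show {t ∈ range K | a ≤ t ∧ t < b} = Ico a b by
      ext; simp only [mem_filter, mem_range, mem_Ico]; omega, Nat.card_Ico]
  rw [sum_add_distrib, hcount i j hj, hcount j i hi, Nat.dist, add_comm]

theorem Finset.sum_sum_natDist_eq {α : Type*} (s : Finset α) (f : α → ℕ) {K : ℕ}
    (hf : ∀ a ∈ s, f a ≤ K) :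
    ∑ a ∈ s, ∑ b ∈ s, Nat.dist (f a) (f b)
      = 2 * ∑ t ∈ range K, #{a ∈ s | f a ≤ t} * #{a ∈ s | t < f a} := by
  set X : α → α → ℕ → ℕ := fun a b t ↦
    (if f a ≤ t then 1 else 0) * (if t < f b then 1 else 0)
  calc ∑ a ∈ s, ∑ b ∈ s, Nat.dist (f a) (f b)
      = ∑ a ∈ s, ∑ b ∈ s, ∑ t ∈ range K, (X a b t + X b a t) :=
        sum_congr rfl fun a ha ↦ sum_congr rfl fun b hb ↦
          natDist_eq_sum_range (hf a ha) (hf b hb)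
    _ = 2 * ∑ a ∈ s, ∑ b ∈ s, ∑ t ∈ range K, X a b t := by
        simp only [sum_add_distrib]
        rw [sum_comm (f := fun a b ↦ ∑ t ∈ range K, X b a t), two_mul]
    _ = 2 * ∑ t ∈ range K, ∑ a ∈ s, ∑ b ∈ s, X a b t := by
        rw [(sum_congr rfl fun _ _ ↦ sum_comm).trans sum_comm]
    _ = _ := by simp only [X, card_filter, sum_mul_sum]

lemma card_filter_natDist_eq_one_add {k i : ℕ} (hi : i < k) :
    #{j ∈ range k | Nat.dist i j = 1} + (if i = 0 then 1 else 0) + (if i + 1 = k then 1 else 0)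
      = 2 := by
  have hsplit : {j ∈ range k | Nat.dist i j = 1}
      = {j ∈ range k | j + 1 = i} ∪ {j ∈ range k | j = i + 1} := by
    ext j; simp only [mem_filter, mem_union, mem_range]; unfold Nat.dist; omega
  have hlow : #{j ∈ range k | j + 1 = i} + (if i = 0 then 1 else 0) = 1 := by
    rcases Nat.eq_zero_or_pos i with rfl | h0
    · simp
    · rw [show {j ∈ range k | j + 1 = i} = {i - 1} by
          ext; simp only [mem_filter, mem_range, mem_singleton]; omega]
      rw [card_singleton, if_neg (by omega)]
  have hhigh : #{j ∈ range k | j = i + 1} + (if i + 1 = k then 1 else 0) = 1 := by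
    simp only [filter_eq', mem_range]
    split_ifs <;> simp only [card_singleton, card_empty] <;> omega
  rw [hsplit, card_union_of_disjoint (disjoint_filter.2 fun _ _ _ ↦ by omega)]
  omega

lemma sum_range_succ_mul_succ_eq_Fseq (k : ℕ) (y : ℕ → ℕ) :
    ∑ t ∈ range (k - 1),
        ((∑ i ∈ range (t + 1), y i) + 1) * ((∑ j ∈ Ico (t + 1) k, y j) + 1)
      = Fseq k y + (k - 1) * ((∑ i ∈ range k, y i) + 1) := by
  have hterm : ∀ t ∈ range (k - 1),
      ((∑ i ∈ range (t + 1), y i) + 1) * ((∑ j ∈ Ico (t + 1) k, y j) + 1)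
        = (∑ i ∈ range (t + 1), y i) * (∑ j ∈ Ico (t + 1) k, y j)
          + ((∑ i ∈ range k, y i) + 1) := by
    intro t ht
    rw [← sum_range_add_sum_Ico y (by rw [mem_range] at ht; omega : t + 1 ≤ k)]
    ring
  rw [sum_congr rfl hterm, sum_add_distrib, sum_const, card_range, smul_eq_mul, Fseq]

namespace SimpleGraph

variable {V : Type*} {G : SimpleGraph V} {k : ℕ} {v : ℕ → V}

lemma degN_eq_degree (v : V) [Fintype (G.neighborSet v)] : degN G v = G.degree v := by
  rw [degN, ← card_neighborSet_eq_degree, ← Nat.card_eq_fintype_card]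
  rfl

lemma IsAcyclic.dist_eq_length_of_isPath (hG : G.IsAcyclic) {u w : V} {p : G.Walk u w}
    (hp : p.IsPath) : G.dist u w = p.length := by
  obtain ⟨q, hq, hqlen⟩ := p.reachable.exists_path_of_dist
  have : p = q := congrArg Subtype.val ((hG.subsingleton_path u w).elim ⟨p, hp⟩ ⟨q, hq⟩)
  rw [this, hqlen]

lemma Connected.dist_eq_dist_add_one_of_adj_iff (hG : G.Connected) {u w x : V}
    (hw : ∀ b, G.Adj w b ↔ b = x) (hu : u ≠ w) : G.dist u w = G.dist u x + 1 := by
  have hxw : G.Adj x w := ((hw x).2 rfl).symm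
  apply le_antisymm
  · calc G.dist u w ≤ G.dist u x + G.dist x w := hG.dist_triangle
      _ = G.dist u x + 1 := by rw [dist_eq_one_iff_adj.mpr hxw]
  · obtain ⟨q, hq⟩ := hG.exists_walk_length_eq_dist w u
    cases q with
    | nil => exact absurd rfl hu
    | cons h r =>
      obtain rfl := (hw _).1 h
      rw [dist_comm (v := w), ← hq, Walk.length_cons, dist_comm]
      exact Nat.add_le_add_right (dist_le r) 1

lemma exists_walk_spine (hadj : ∀ i, i + 1 < k → G.Adj (v i) (v (i + 1))) (d : ℕ) :
    ∀ i j, i + d = j → j < k →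
      ∃ w : G.Walk (v i) (v j), w.length = d ∧ w.support = (List.range' i (d + 1)).map v := by
  induction d with
  | zero =>
    rintro i j rfl -
    exact ⟨Walk.nil, rfl, by simp⟩
  | succ d ih =>
    intro i j hij hj
    obtain ⟨w, hlen, hsupp⟩ := ih (i + 1) j (by omega) hj
    refine ⟨Walk.cons (hadj i (by omega)) w, by simp [hlen], ?_⟩
    rw [Walk.support_cons, hsupp, List.range'_succ (n := d + 1), List.map_cons]

lemma IsAcyclic.dist_spine (hG : G.IsAcyclic) (hinj : Set.InjOn v (Set.Iio k))
    (hadj : ∀ i, i + 1 < k → G.Adj (v i) (v (i + 1))) {i j : ℕ} (hi : i < k) (hj : j < k) :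
    G.dist (v i) (v j) = Nat.dist i j := by
  wlog hij : i ≤ j generalizing i j
  · rw [dist_comm, Nat.dist_comm, this hj hi (by omega)]
  obtain ⟨w, hlen, hsupp⟩ := exists_walk_spine hadj (j - i) i j (by omega) hj
  have hw : w.IsPath := by
    rw [Walk.isPath_def, hsupp]
    refine List.Nodup.map_on (fun a ha b hb hab ↦ hinj ?_ ?_ hab) List.nodup_range'
    · simp only [List.mem_range'_1] at ha; simp only [Set.mem_Iio]; omega
    · simp only [List.mem_range'_1] at hb; simp only [Set.mem_Iio]; omega
  rw [hG.dist_eq_length_of_isPath hw, hlen, Nat.dist_eq_sub_of_le hij]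

section SpineIndex

variable [DecidableEq V]

def spine (k : ℕ) (v : ℕ → V) : Finset V := (range k).image v

lemma mem_spine {u : V} : u ∈ spine k v ↔ ∃ i < k, v i = u := by
  simp [spine]

lemma card_spine (hinj : Set.InjOn v (Set.Iio k)) : #(spine k v) = k := by
  rw [spine, card_image_of_injOn (by rwa [coe_range]), card_range]

lemma card_filter_notMem_spine_add [Fintype V] (hinj : Set.InjOn v (Set.Iio k)) :
    #{u | u ∉ spine k v} + k = Fintype.card V := by
  have := card_filter_add_card_filter_not (s := univ) (· ∈ spine k v)
  rw [filter_univ_mem, card_spine hinj, card_univ] at this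
  omega

lemma card_spine_neighbors_add [Fintype V] [DecidableRel G.Adj] (hG : G.IsAcyclic)
    (hinj : Set.InjOn v (Set.Iio k)) (hadj : ∀ i, i + 1 < k → G.Adj (v i) (v (i + 1)))
    {i : ℕ} (hi : i < k) :
    #{b ∈ G.neighborFinset (v i) | b ∈ spine k v} + (if i = 0 then 1 else 0)
      + (if i + 1 = k then 1 else 0) = 2 := by
  have hset : {b ∈ G.neighborFinset (v i) | b ∈ spine k v}
      = {j ∈ range k | Nat.dist i j = 1}.image v := by
    ext b
    simp only [mem_filter, mem_neighborFinset, mem_spine, mem_image, mem_range]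
    constructor
    · rintro ⟨hb, j, hj, rfl⟩
      exact ⟨j, ⟨hj, hG.dist_spine hinj hadj hi hj ▸ dist_eq_one_iff_adj.2 hb⟩, rfl⟩
    · rintro ⟨j, ⟨hj, hij⟩, rfl⟩
      refine ⟨?_, j, hj, rfl⟩
      rw [← dist_eq_one_iff_adj, hG.dist_spine hinj hadj hi hj, hij]
  rw [hset, card_image_of_injOn (hinj.mono fun j hj ↦ mem_range.1 (mem_filter.1 hj).1)]
  exact card_filter_natDist_eq_one_add hi

/-- `p u` is the index of the spine vertex that `u` is, or that `u` hangs from. -/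
structure IsSpineIndex (G : SimpleGraph V) (k : ℕ) (v : ℕ → V) (p : V → ℕ) : Prop where
  lt : ∀ u, p u < k
  apply_spine : ∀ i < k, p (v i) = i
  adj_iff : ∀ u ∉ spine k v, ∀ b, G.Adj u b ↔ b = v (p u)

lemma exists_isSpineIndex (hinj : Set.InjOn v (Set.Iio k))
    (hleaf : ∀ u : V, (∀ i, i < k → u ≠ v i) →
      degN G u = 1 ∧ ∃ i, i < k ∧ G.Adj u (v i)) :
    ∃ p, IsSpineIndex G k v p := by
  have hex : ∀ u, ∃ i < k,
      (u ∈ spine k v → v i = u) ∧ (u ∉ spine k v → G.Adj u (v i)) := by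
    intro u
    by_cases hu : u ∈ spine k v
    · obtain ⟨i, hi, rfl⟩ := mem_spine.1 hu
      exact ⟨i, hi, fun _ ↦ rfl, absurd hu⟩
    · obtain ⟨-, i, hi, hadj⟩ := hleaf u fun i hi h ↦ hu (mem_spine.2 ⟨i, hi, h.symm⟩)
      exact ⟨i, hi, fun h ↦ absurd h hu, fun _ ↦ hadj⟩
  choose p hpk hp using hex
  refine ⟨p, hpk, fun i hi ↦ ?_, fun u hu b ↦ ⟨fun hb ↦ ?_, ?_⟩⟩
  · exact hinj (hpk _) hi ((hp (v i)).1 (mem_spine.2 ⟨i, hi, rfl⟩))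
  · have hdeg := (hleaf u fun i hi h ↦ hu (mem_spine.2 ⟨i, hi, h.symm⟩)).1
    obtain ⟨hsub, -⟩ := Nat.card_eq_one_iff_unique.1 hdeg
    exact congrArg Subtype.val (hsub.elim ⟨b, hb⟩ ⟨v (p u), (hp u).2 hu⟩)
  · rintro rfl
    exact (hp u).2 hu

namespace IsSpineIndex

variable {p : V → ℕ}

lemma apply_eq_of_mem (hp : IsSpineIndex G k v p) {u : V} (hu : u ∈ spine k v) :
    v (p u) = u := by
  obtain ⟨i, hi, rfl⟩ := mem_spine.1 hu
  rw [hp.apply_spine i hi]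

lemma dist_spine_right (hp : IsSpineIndex G k v p) (hT : G.IsTree)
    (hinj : Set.InjOn v (Set.Iio k)) (hadj : ∀ i, i + 1 < k → G.Adj (v i) (v (i + 1)))
    (u : V) {j : ℕ} (hj : j < k) :
    G.dist u (v j) = Nat.dist (p u) j + if u ∈ spine k v then 0 else 1 := by
  by_cases hu : u ∈ spine k v
  · conv_lhs => rw [← hp.apply_eq_of_mem hu]
    rw [hT.isAcyclic.dist_spine hinj hadj (hp.lt u) hj, if_pos hu, add_zero]
  · have hne : v j ≠ u := fun h ↦ hu (h ▸ mem_spine.2 ⟨j, hj, rfl⟩)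
    rw [dist_comm, hT.connected.dist_eq_dist_add_one_of_adj_iff (hp.adj_iff u hu) hne,
      hT.isAcyclic.dist_spine hinj hadj hj (hp.lt u), Nat.dist_comm, if_neg hu]

lemma dist_add_ite (hp : IsSpineIndex G k v p) (hT : G.IsTree)
    (hinj : Set.InjOn v (Set.Iio k)) (hadj : ∀ i, i + 1 < k → G.Adj (v i) (v (i + 1)))
    (u w : V) :
    G.dist u w + (if u = w ∧ w ∉ spine k v then 2 else 0)
      = Nat.dist (p u) (p w) + (if u ∈ spine k v then 0 else 1)
          + (if w ∈ spine k v then 0 else 1) := by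
  by_cases hw : w ∈ spine k v
  · rw [if_neg fun h ↦ h.2 hw, if_pos hw, add_zero, add_zero,
      ← hp.dist_spine_right hT hinj hadj u (hp.lt w), hp.apply_eq_of_mem hw]
  by_cases huw : u = w
  · subst huw
    simp [hw]
  rw [hT.connected.dist_eq_dist_add_one_of_adj_iff (hp.adj_iff w hw) huw,
    hp.dist_spine_right hT hinj hadj u (hp.lt w)]
  simp [hw, huw]

variable [Fintype V]

lemma sum_sum_dist_add (hp : IsSpineIndex G k v p) (hT : G.IsTree)
    (hinj : Set.InjOn v (Set.Iio k)) (hadj : ∀ i, i + 1 < k → G.Adj (v i) (v (i + 1))) :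
    ∑ u, ∑ w, G.dist u w + 2 * #{u | u ∉ spine k v}
      = ∑ u, ∑ w, Nat.dist (p u) (p w) + 2 * Fintype.card V * #{u | u ∉ spine k v} := by
  have hoff : ∑ u, (if u ∈ spine k v then 0 else 1) = #{u | u ∉ spine k v} := by
    simp [sum_ite]
  have hdiag : ∑ u, ∑ w, (if u = w ∧ w ∉ spine k v then 2 else 0)
      = 2 * #{u | u ∉ spine k v} := by
    simp [ite_and, sum_ite, mul_comm]
  rw [← hdiag]
  simp only [← sum_add_distrib, hp.dist_add_ite hT hinj hadj]
  simp only [sum_add_distrib, sum_const, card_univ, smul_eq_mul, ← mul_sum, hoff]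
  ring

variable [DecidableRel G.Adj]

lemma card_fiber (hp : IsSpineIndex G k v p) (hG : G.IsAcyclic) (hinj : Set.InjOn v (Set.Iio k))
    (hadj : ∀ i, i + 1 < k → G.Adj (v i) (v (i + 1))) {y : ℕ → ℕ}
    (hdeg : ∀ i < k, G.degree (v i) = y i + 1) {i : ℕ} (hi : i < k) :
    #{u | p u = i} = y i + (if i = 0 then 1 else 0) + (if i + 1 = k then 1 else 0) := by
  have hfiber : ({u | p u = i} : Finset V)
      = insert (v i) {b ∈ G.neighborFinset (v i) | b ∉ spine k v} := by
    ext u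
    simp only [mem_filter, mem_univ, true_and, mem_insert, mem_neighborFinset]
    constructor
    · rintro rfl
      by_cases hu : u ∈ spine k v
      · exact .inl (hp.apply_eq_of_mem hu).symm
      · exact .inr ⟨((hp.adj_iff u hu _).2 rfl).symm, hu⟩
    · rintro (rfl | ⟨hu, hns⟩)
      · exact hp.apply_spine i hi
      · exact hinj (hp.lt u) hi ((hp.adj_iff u hns _).1 hu.symm).symm
  have hvi : v i ∉ ({b ∈ G.neighborFinset (v i) | b ∉ spine k v} : Finset V) := by
    simp
  have hsplit := card_filter_add_card_filter_not (s := G.neighborFinset (v i))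
    (· ∈ spine k v)
  rw [card_neighborFinset_eq_degree, hdeg i hi] at hsplit
  have := card_spine_neighbors_add hG hinj hadj hi
  rw [hfiber, card_insert_of_notMem hvi]
  omega

lemma card_le_mul_card_lt (hp : IsSpineIndex G k v p) (hG : G.IsAcyclic)
    (hinj : Set.InjOn v (Set.Iio k)) (hadj : ∀ i, i + 1 < k → G.Adj (v i) (v (i + 1)))
    {y : ℕ → ℕ} (hdeg : ∀ i < k, G.degree (v i) = y i + 1)
    (hcard : Fintype.card V = 2 + ∑ i ∈ range k, y i) {t : ℕ} (ht : t + 1 < k) :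
    #{u | p u ≤ t} * #{u | t < p u}
      = ((∑ i ∈ range (t + 1), y i) + 1) * ((∑ j ∈ Ico (t + 1) k, y j) + 1) := by
  have hle : #{u | p u ≤ t} = (∑ i ∈ range (t + 1), y i) + 1 := by
    rw [card_eq_sum_card_fiberwise (f := p) (t := range (t + 1))
      fun u hu ↦ mem_range.2 (Nat.lt_succ_of_le (mem_filter.1 hu).2)]
    have hfiber : ∀ i ∈ range (t + 1), #{u ∈ {u | p u ≤ t} | p u = i}
        = y i + (if i = 0 then 1 else 0) + (if i + 1 = k then 1 else 0) := by
      intro i hi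
      rw [mem_range] at hi
      rw [filter_filter, ← hp.card_fiber hG hinj hadj hdeg (by omega : i < k)]
      congr 1; ext u; simp only [mem_filter, mem_univ, true_and]; omega
    rw [sum_congr rfl hfiber, sum_add_distrib, sum_add_distrib, sum_ite_eq', if_pos (by simp),
      sum_eq_zero fun i hi ↦ if_neg (by rw [mem_range] at hi; omega), add_zero]
  have hlt : #{u | p u ≤ t} + #{u | t < p u} = Fintype.card V := by
    simpa only [not_le, card_univ] using
      card_filter_add_card_filter_not (s := univ) fun u ↦ p u ≤ t
  rw [← sum_range_add_sum_Ico y (by omega : t + 1 ≤ k)] at hcard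
  rw [hle]
  congr 1
  omega

end IsSpineIndex

end SpineIndex

end SimpleGraph

open SimpleGraph

theorem wiener_of_caterpillar_general {V : Type*} [Fintype V] (G : SimpleGraph V)
    (k n : ℕ) (y : ℕ → ℕ) (hk : 1 ≤ k)
    (hcard : Fintype.card V = n)
    (hn : n = 2 + ∑ i ∈ Finset.range k, y i)
    (hT : G.IsTree)
    (hcat : IsCaterpillar G k y) :
    wienerIndex G = (n - 1) ^ 2 + Fseq k y := by
  classical
  obtain ⟨v, hinj, hadj, hdeg, hleaf⟩ := hcat
  replace hinj : Set.InjOn v (Set.Iio k) := fun i hi j hj ↦ hinj i j hi hj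
  replace hdeg : ∀ i < k, G.degree (v i) = y i + 1 := fun i hi ↦
    degN_eq_degree (G := G) (v i) ▸ hdeg i hi
  obtain ⟨p, hp⟩ := exists_isSpineIndex hinj hleaf
  have hsum := hp.sum_sum_dist_add hT hinj hadj
  rw [sum_sum_natDist_eq univ p (K := k - 1) fun u _ ↦ Nat.le_sub_one_of_lt (hp.lt u),
    sum_congr rfl fun t ht ↦ hp.card_le_mul_card_lt hT.isAcyclic hinj hadj hdeg (hcard ▸ hn)
      (by rw [mem_range] at ht; omega), sum_range_succ_mul_succ_eq_Fseq] at hsum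
  have hoff := card_filter_notMem_spine_add hinj
  have hdist : ∑ u, ∑ w, G.dist u w = 2 * ((n - 1) ^ 2 + Fseq k y) := by
    rw [show ∑ i ∈ range k, y i + 1 = n - 1 by omega, hcard] at hsum
    obtain ⟨j, rfl⟩ : ∃ j, k = j + 1 := ⟨k - 1, by omega⟩
    obtain ⟨m, rfl⟩ : ∃ m, n = m + 1 := ⟨n - 1, by omega⟩
    obtain rfl : m = #{u | u ∉ spine (j + 1) v} + j := by omega
    simp only [Nat.add_sub_cancel] at hsum ⊢
    linarith
  rw [wienerIndex, hdist, Nat.mul_div_cancel_left _ two_pos]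

/-- The Wiener index of the caterpillar `T(y_1,…,y_k)` of order `n`
equals `(n-1)^2 + F(y_1,…,y_k)`. -/
theorem wiener_of_caterpillar {V : Type*} [Fintype V] (G : SimpleGraph V)
    (k n : ℕ) (y : ℕ → ℕ) (hk : 1 ≤ k)
    (hy : ∀ i, i < k → 1 ≤ y i)
    (hcard : Fintype.card V = n)
    (hn : n = 2 + ∑ i ∈ Finset.range k, y i)
    (hT : G.IsTree)
    (hcat : IsCaterpillar G k y) :
    wienerIndex G = (n - 1) ^ 2 + Fseq k y :=
  wiener_of_caterpillar_general G k n y hk hcard hn hT hcat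
end

section
/- Let w_1 ≥ w_2 ≥ ⋯ ≥ w_k ≥ 1 be positive integers with k ≥ 5, and let F(y_1,…,y_k) = Σ_{i=1}^{k-1}(Σ_{j=1}^{i} y_j)(Σ_{j=i+1}^{k} y_j). Suppose (z_1,…,z_k) maximizes F over all permutations (y_1,…,y_k) of (w_1,…,w_k) with y_1 ≥ y_k. Then there exists t with 2 ≤ t ≤ k−2 such that z_1+⋯+z_{t−2} ≤ z_{t+1}+⋯+z_k and z_1+⋯+z_{t−1} > z_{t+2}+⋯+z_k; moreover if the first inequality is strict, then z_1 ≥ z_2 ≥ ⋯ ≥ z_t and z_t ≤ z_{t+1} ≤ ⋯ ≤ z_k. -/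
open Finset

private lemma rearr (B C p q : ℕ) (h1 : p < q) (h2 : B < C) :
    (B + p) * (q + C) < (B + q) * (p + C) := by nlinarith

private lemma map_perm_range {k : ℕ} {f : ℕ → ℕ} (hinj : Set.InjOn f (Finset.range k))
    (him : Finset.image f (Finset.range k) = Finset.range k) :
    Multiset.map f (Finset.range k).val = (Finset.range k).val := by
  rw [← Finset.image_val_of_injOn hinj, him]

private lemma sum_comp_swap {M : Type*} [AddCommMonoid M] (s : Finset ℕ) (f : ℕ → M)
    (a b : ℕ) (ha : a ∈ s) (hb : b ∈ s) :
    ∑ j ∈ s, f (Equiv.swap a b j) = ∑ j ∈ s, f j := by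
  refine Finset.sum_equiv (Equiv.swap a b) (fun i => ?_) (fun i _ => rfl)
  rcases eq_or_ne i a with rfl | hia
  · simp [Equiv.swap_apply_left, ha, hb]
  rcases eq_or_ne i b with rfl | hib
  · simp [Equiv.swap_apply_right, ha, hb]
  · rw [Equiv.swap_apply_of_ne_of_ne hia hib]

private lemma sum_rev_prefix (y : ℕ → ℕ) (k m : ℕ) (hm : m ≤ k) :
    ∑ j ∈ Finset.range m, y (k - 1 - j) = ∑ j ∈ Finset.Ico (k - m) k, y j := by
  refine Finset.sum_nbij' (fun j => k - 1 - j) (fun j => k - 1 - j) ?_ ?_ ?_ ?_ ?_ <;>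
    intro a h <;> simp only [Finset.mem_range, Finset.mem_Ico] at * <;> first | omega | rfl

private lemma sum_rev_suffix (y : ℕ → ℕ) (k m : ℕ) :
    ∑ j ∈ Finset.Ico m k, y (k - 1 - j) = ∑ j ∈ Finset.range (k - m), y j := by
  refine Finset.sum_nbij' (fun j => k - 1 - j) (fun j => k - 1 - j) ?_ ?_ ?_ ?_ ?_ <;>
    intro a h <;> simp only [Finset.mem_range, Finset.mem_Ico] at * <;> first | omega | rfl

private lemma Fseq_rev (k : ℕ) (y : ℕ → ℕ) :
    Fseq k (fun i => y (k - 1 - i)) = Fseq k y := by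
  unfold Fseq
  refine Finset.sum_nbij' (fun i => k - 2 - i) (fun i => k - 2 - i) ?_ ?_ ?_ ?_ ?_ <;>
    intro a h <;> simp only [Finset.mem_range] at *
  · omega
  · omega
  · omega
  · omega
  · rw [sum_rev_prefix y k (a + 1) (by omega), sum_rev_suffix y k (a + 1)]
    have h1 : k - (a + 1) = (k - 2 - a) + 1 := by omega
    rw [h1, mul_comm]

private lemma Fseq_swap (k a : ℕ) (ha : a + 1 < k) (z : ℕ → ℕ) :
    Fseq k (fun i => z (Equiv.swap a (a + 1) i)) +
      (∑ j ∈ Finset.range a, z j + z a) * (z (a + 1) + ∑ j ∈ Finset.Ico (a + 2) k, z j) =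
    Fseq k z +
      (∑ j ∈ Finset.range a, z j + z (a + 1)) * (z a + ∑ j ∈ Finset.Ico (a + 2) k, z j) := by
  have hmem : a ∈ Finset.range (k - 1) := by simp; omega
  unfold Fseq
  rw [← Finset.add_sum_erase _ _ hmem, ← Finset.add_sum_erase _
    (fun i => (∑ j ∈ Finset.range (i + 1), z j) * (∑ j ∈ Finset.Ico (i + 1) k, z j)) hmem]
  have hE : ∑ i ∈ (Finset.range (k - 1)).erase a,
      (∑ j ∈ Finset.range (i + 1), (fun i => z (Equiv.swap a (a + 1) i)) j) *
        (∑ j ∈ Finset.Ico (i + 1) k, (fun i => z (Equiv.swap a (a + 1) i)) j) =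
      ∑ i ∈ (Finset.range (k - 1)).erase a,
      (∑ j ∈ Finset.range (i + 1), z j) * (∑ j ∈ Finset.Ico (i + 1) k, z j) := by
    refine Finset.sum_congr rfl ?_
    intro i hi
    simp only [Finset.mem_erase, Finset.mem_range] at hi
    obtain ⟨hia, hik⟩ := hi
    rcases Nat.lt_or_ge i a with hlt | hge
    · have h1 : ∑ j ∈ Finset.range (i + 1), z (Equiv.swap a (a + 1) j)
          = ∑ j ∈ Finset.range (i + 1), z j := by
        refine Finset.sum_congr rfl fun j hj => ?_
        simp only [Finset.mem_range] at hj
        rw [Equiv.swap_apply_of_ne_of_ne (by omega) (by omega)]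
      have h2 : ∑ j ∈ Finset.Ico (i + 1) k, z (Equiv.swap a (a + 1) j)
          = ∑ j ∈ Finset.Ico (i + 1) k, z j :=
        sum_comp_swap _ z a (a + 1) (by simp [Finset.mem_Ico]; omega)
          (by simp [Finset.mem_Ico]; omega)
      simp only [h1, h2]
    · have hgt : a < i := lt_of_le_of_ne hge (Ne.symm hia)
      have h1 : ∑ j ∈ Finset.range (i + 1), z (Equiv.swap a (a + 1) j)
          = ∑ j ∈ Finset.range (i + 1), z j :=
        sum_comp_swap _ z a (a + 1) (by simp; omega) (by simp; omega)
      have h2 : ∑ j ∈ Finset.Ico (i + 1) k, z (Equiv.swap a (a + 1) j)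
          = ∑ j ∈ Finset.Ico (i + 1) k, z j := by
        refine Finset.sum_congr rfl fun j hj => ?_
        simp only [Finset.mem_Ico] at hj
        rw [Equiv.swap_apply_of_ne_of_ne (by omega) (by omega)]
      simp only [h1, h2]
  rw [hE]
  have hTy : (∑ j ∈ Finset.range (a + 1), (fun i => z (Equiv.swap a (a + 1) i)) j) *
      (∑ j ∈ Finset.Ico (a + 1) k, (fun i => z (Equiv.swap a (a + 1) i)) j) =
      (∑ j ∈ Finset.range a, z j + z (a + 1)) * (z a + ∑ j ∈ Finset.Ico (a + 2) k, z j) := by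
    have h1 : ∑ j ∈ Finset.range (a + 1), z (Equiv.swap a (a + 1) j)
        = ∑ j ∈ Finset.range a, z j + z (a + 1) := by
      rw [Finset.sum_range_succ]
      congr 1
      · refine Finset.sum_congr rfl fun j hj => ?_
        simp only [Finset.mem_range] at hj
        rw [Equiv.swap_apply_of_ne_of_ne (by omega) (by omega)]
      · rw [Equiv.swap_apply_left]
    have h2 : ∑ j ∈ Finset.Ico (a + 1) k, z (Equiv.swap a (a + 1) j)
        = z a + ∑ j ∈ Finset.Ico (a + 2) k, z j := by
      rw [Finset.sum_eq_sum_Ico_succ_bot ha]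
      congr 1
      · rw [Equiv.swap_apply_right]
      · refine Finset.sum_congr rfl fun j hj => ?_
        simp only [Finset.mem_Ico] at hj
        rw [Equiv.swap_apply_of_ne_of_ne (by omega) (by omega)]
    simp only [h1, h2]
  have hTz : (∑ j ∈ Finset.range (a + 1), z j) * (∑ j ∈ Finset.Ico (a + 1) k, z j) =
      (∑ j ∈ Finset.range a, z j + z a) * (z (a + 1) + ∑ j ∈ Finset.Ico (a + 2) k, z j) := by
    rw [Finset.sum_range_succ, Finset.sum_eq_sum_Ico_succ_bot ha]
  rw [hTy, hTz]
  ring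

/-- Lemma 2.5: structure of a maximizer of `F` over the permutations of
`(w_1,…,w_k)` with first entry at least the last (0-indexed throughout). -/
theorem maximizer_structure (k : ℕ) (hk : 5 ≤ k) (w z : ℕ → ℕ)
    (hw1 : ∀ i, i < k → 1 ≤ w i)
    (hwmono : ∀ i j, i ≤ j → j < k → w j ≤ w i)
    (hperm : (Finset.range k).val.map z = (Finset.range k).val.map w)
    (hz : z (k - 1) ≤ z 0)
    (hmax : ∀ y : ℕ → ℕ,
      (Finset.range k).val.map y = (Finset.range k).val.map w →
      y (k - 1) ≤ y 0 → Fseq k y ≤ Fseq k z) :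
    ∃ t, 2 ≤ t ∧ t ≤ k - 2 ∧
      (∑ i ∈ Finset.range (t - 2), z i) ≤ (∑ i ∈ Finset.Ico t k, z i) ∧
      (∑ i ∈ Finset.Ico (t + 1) k, z i) < (∑ i ∈ Finset.range (t - 1), z i) ∧
      ((∑ i ∈ Finset.range (t - 2), z i) < (∑ i ∈ Finset.Ico t k, z i) →
        (∀ i j, i ≤ j → j ≤ t - 1 → z j ≤ z i) ∧
        (∀ i j, t - 1 ≤ i → i ≤ j → j < k → z i ≤ z j)) := by
    -- positivity of z on range k
  have hz1 : ∀ i, i < k → 1 ≤ z i := by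
    intro i hi
    have hm : z i ∈ (Finset.range k).val.map z :=
      Multiset.mem_map_of_mem z (by simpa using hi)
    rw [hperm] at hm
    obtain ⟨j, hj, hji⟩ := Multiset.mem_map.mp hm
    rw [← hji]
    exact hw1 j (by simpa using hj)
  -- extended maximality over all permutations
  have hmax' : ∀ y : ℕ → ℕ,
      (Finset.range k).val.map y = (Finset.range k).val.map w → Fseq k y ≤ Fseq k z := by
    intro y hy
    by_cases hc : y (k - 1) ≤ y 0
    · exact hmax y hy hc
    · push_neg at hc
      have hinj : Set.InjOn (fun i => k - 1 - i) (Finset.range k) := by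
        intro i hi j hj hij
        simp only [Finset.coe_range, Set.mem_Iio] at hi hj
        simp only at hij
        omega
      have him : Finset.image (fun i => k - 1 - i) (Finset.range k) = Finset.range k := by
        ext x
        simp only [Finset.mem_image, Finset.mem_range]
        constructor
        · rintro ⟨i, hi, rfl⟩; omega
        · intro hx; exact ⟨k - 1 - x, by omega, by omega⟩
      have hmr : (Finset.range k).val.map (fun i => y (k - 1 - i))
          = (Finset.range k).val.map w := by
        have h1 : (fun i => y (k - 1 - i)) = y ∘ (fun i => k - 1 - i) := rfl
        rw [h1, ← Multiset.map_map, map_perm_range hinj him, hy]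
      have hcon : (fun i => y (k - 1 - i)) (k - 1) ≤ (fun i => y (k - 1 - i)) 0 := by
        simp only [Nat.sub_self, Nat.sub_zero]
        exact hc.le
      have := hmax _ hmr hcon
      rwa [Fseq_rev k y] at this
  -- the swap move: contradiction machine
  have hswap : ∀ a, a + 1 < k →
      (∑ j ∈ Finset.range a, z j + z a) * (z (a + 1) + ∑ j ∈ Finset.Ico (a + 2) k, z j) <
      (∑ j ∈ Finset.range a, z j + z (a + 1)) * (z a + ∑ j ∈ Finset.Ico (a + 2) k, z j) →
      False := by
    intro a ha hlt
    have hinj : Set.InjOn (⇑(Equiv.swap a (a + 1))) (Finset.range k) :=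
      (Equiv.injective _).injOn
    have hbd : ∀ i, i < k → Equiv.swap a (a + 1) i < k := by
      intro i hi
      rcases eq_or_ne i a with rfl | h1
      · rw [Equiv.swap_apply_left]; omega
      rcases eq_or_ne i (a + 1) with rfl | h2
      · rw [Equiv.swap_apply_right]; omega
      · rw [Equiv.swap_apply_of_ne_of_ne h1 h2]; exact hi
    have him : Finset.image (⇑(Equiv.swap a (a + 1))) (Finset.range k) = Finset.range k := by
      ext x
      simp only [Finset.mem_image, Finset.mem_range]
      constructor
      · rintro ⟨i, hi, rfl⟩; exact hbd i hi
      · intro hx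
        exact ⟨Equiv.swap a (a + 1) x, hbd x hx, Equiv.swap_apply_self _ _ _⟩
    have hmr : (Finset.range k).val.map (fun i => z (Equiv.swap a (a + 1) i))
        = (Finset.range k).val.map w := by
      have h1 : (fun i => z (Equiv.swap a (a + 1) i)) = z ∘ ⇑(Equiv.swap a (a + 1)) := rfl
      rw [h1, ← Multiset.map_map, map_perm_range hinj him, hperm]
    have hle := hmax' _ hmr
    have heq := Fseq_swap k a ha z
    omega
  -- prefix / suffix monotonicity
  have hPmono : ∀ m n : ℕ, m ≤ n →
      (∑ i ∈ Finset.range m, z i) ≤ ∑ i ∈ Finset.range n, z i :=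
    fun m n h => Finset.sum_le_sum_of_subset (Finset.range_subset_range.mpr h)
  have hQmono : ∀ m n : ℕ, m ≤ n →
      (∑ i ∈ Finset.Ico n k, z i) ≤ ∑ i ∈ Finset.Ico m k, z i :=
    fun m n h => Finset.sum_le_sum_of_subset (Finset.Ico_subset_Ico h le_rfl)
  -- choose t
  set s : Finset ℕ := (Finset.Icc 2 (k - 2)).filter
    (fun t => (∑ i ∈ Finset.range (t - 2), z i) ≤ ∑ i ∈ Finset.Ico t k, z i) with hs
  have h2s : 2 ∈ s := by
    rw [hs, Finset.mem_filter]
    refine ⟨by simp [Finset.mem_Icc]; omega, ?_⟩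
    simp
  have hne : s.Nonempty := ⟨2, h2s⟩
  set t := s.max' hne with htdef
  have htmem : t ∈ s := Finset.max'_mem s hne
  rw [hs, Finset.mem_filter, Finset.mem_Icc] at htmem
  obtain ⟨⟨ht2, htk⟩, hineq1⟩ := htmem
  have hineq2 : (∑ i ∈ Finset.Ico (t + 1) k, z i) < ∑ i ∈ Finset.range (t - 1), z i := by
    rcases eq_or_lt_of_le htk with heq | hlt
    · -- t = k - 2
      have hIco : Finset.Ico (t + 1) k = {k - 1} := by
        ext x
        simp only [Finset.mem_Ico, Finset.mem_singleton]
        omega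
      rw [hIco, Finset.sum_singleton]
      have hsub : ({0, 1} : Finset ℕ) ⊆ Finset.range (t - 1) := by
        intro x hx
        simp only [Finset.mem_insert, Finset.mem_singleton] at hx
        simp only [Finset.mem_range]
        omega
      have h01 : (∑ i ∈ ({0, 1} : Finset ℕ), z i) ≤ ∑ i ∈ Finset.range (t - 1), z i :=
        Finset.sum_le_sum_of_subset hsub
      rw [Finset.sum_insert (by simp), Finset.sum_singleton] at h01
      have := hz1 1 (by omega)
      omega
    · -- t < k - 2, use maximality of t
      by_contra hcon
      push_neg at hcon
      have hts : t + 1 ∈ s := by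
        rw [hs, Finset.mem_filter, Finset.mem_Icc]
        refine ⟨⟨by omega, by omega⟩, ?_⟩
        have h1 : t + 1 - 2 = t - 1 := by omega
        rw [h1]
        exact hcon
      have := Finset.le_max' s (t + 1) hts
      omega
  refine ⟨t, ht2, htk, hineq1, hineq2, ?_⟩
  intro hstrict
  -- adjacent inequalities
  have hadjF : ∀ a, a + 1 ≤ t - 1 → z (a + 1) ≤ z a := by
    intro a hat
    by_contra hcon
    push_neg at hcon
    refine hswap a (by omega) ?_
    have hB : (∑ j ∈ Finset.range a, z j) < ∑ j ∈ Finset.Ico (a + 2) k, z j :=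
      lt_of_le_of_lt (hPmono a (t - 2) (by omega))
        (lt_of_lt_of_le hstrict (hQmono (a + 2) t (by omega)))
    exact rearr _ _ _ _ hcon hB
  have hadjT : ∀ a, t - 1 ≤ a → a + 1 < k → z a ≤ z (a + 1) := by
    intro a hat hak
    by_contra hcon
    push_neg at hcon
    refine hswap a hak ?_
    have hC : (∑ j ∈ Finset.Ico (a + 2) k, z j) < ∑ j ∈ Finset.range a, z j :=
      lt_of_le_of_lt (hQmono (t + 1) (a + 2) (by omega))
        (lt_of_lt_of_le hineq2 (hPmono (t - 1) a hat))
    have h := rearr _ _ _ _ hcon hC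
    calc (∑ j ∈ Finset.range a, z j + z a) *
          (z (a + 1) + ∑ j ∈ Finset.Ico (a + 2) k, z j)
        = ((∑ j ∈ Finset.Ico (a + 2) k, z j) + z (a + 1)) *
          (z a + ∑ j ∈ Finset.range a, z j) := by ring
      _ < ((∑ j ∈ Finset.Ico (a + 2) k, z j) + z a) *
          (z (a + 1) + ∑ j ∈ Finset.range a, z j) := h
      _ = (∑ j ∈ Finset.range a, z j + z (a + 1)) *
          (z a + ∑ j ∈ Finset.Ico (a + 2) k, z j) := by ring
  constructor
  · intro i j
    induction j with
    | zero =>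
      intro hij _
      have : i = 0 := by omega
      subst this; exact le_rfl
    | succ n ih =>
      intro hij hjt
      rcases eq_or_lt_of_le hij with rfl | hlt
      · exact le_rfl
      · exact le_trans (hadjF n hjt) (ih (by omega) (by omega))
  · intro i j
    induction j with
    | zero =>
      intro _ hij _
      have : i = 0 := by omega
      subst this; exact le_rfl
    | succ n ih =>
      intro hti hij hjk
      rcases eq_or_lt_of_le hij with rfl | hlt
      · exact le_rfl
      · exact le_trans (ih hti (by omega) (by omega)) (hadjT n (by omega) hjk)
end

section
/- For positive reals (or integers) and any index i with 1 ≤ i ≤ k−1, swapping adjacent entries z_i and z_{i+1} in the function F(y_1,…,y_k) = Σ_{p=1}^{k-1}(Σ_{j=1}^{p} y_j)(Σ_{j=p+1}^{k} y_j) changes its value by F(z_1,…,z_i,z_{i+1},…,z_k) − F(z_1,…,z_{i+1},z_i,…,z_k) = (z_{i+1} − z_i)·(Σ_{j=1}^{i-1} z_j − Σ_{j=i+2}^{k} z_j). -/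
open Finset

/-- `F(y_1, …, y_k) = ∑_{p=1}^{k-1} (∑_{j≤p} y_j)(∑_{j>p} y_j)` for real sequences
(0-indexed). -/
noncomputable def FseqR (k : ℕ) (y : ℕ → ℝ) : ℝ :=
  ∑ i ∈ Finset.range (k - 1),
    (∑ j ∈ Finset.range (i + 1), y j) * (∑ j ∈ Finset.Ico (i + 1) k, y j)

lemma swap_sum_eq (p : ℕ) (z : ℕ → ℝ) (s : Finset ℕ) (h : p ∈ s ↔ p + 1 ∈ s) :
    ∑ j ∈ s, (if j = p then z (p + 1) else if j = p + 1 then z p else z j)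
      = ∑ j ∈ s, z j := by
  apply Finset.sum_nbij' (fun j => Equiv.swap p (p+1) j) (fun j => Equiv.swap p (p+1) j)
  · intro a ha
    rcases eq_or_ne a p with rfl | h1
    · simpa using h.mp ha
    rcases eq_or_ne a (p+1) with rfl | h2
    · simpa using h.mpr ha
    · simpa [Equiv.swap_apply_of_ne_of_ne h1 h2] using ha
  · intro a ha
    rcases eq_or_ne a p with rfl | h1
    · simpa using h.mp ha
    rcases eq_or_ne a (p+1) with rfl | h2
    · simpa using h.mpr ha
    · simpa [Equiv.swap_apply_of_ne_of_ne h1 h2] using ha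
  · intro a _; simp
  · intro a _; simp
  · intro a _
    rcases eq_or_ne a p with rfl | h1
    · simp
    rcases eq_or_ne a (p+1) with rfl | h2
    · simp [Equiv.swap_apply_right]
    · simp [Equiv.swap_apply_of_ne_of_ne h1 h2, h1, h2]

/-- effect on `F` of swapping two adjacent entries (positions `p` and `p+1`,
0-indexed, corresponding to `z_i, z_{i+1}` with `i = p+1` 1-indexed). -/
theorem F_swap_adjacent (k : ℕ) (hk : 2 ≤ k) (z : ℕ → ℝ)
    (hpos : ∀ i, i < k → 0 < z i) (p : ℕ) (hp : p + 1 < k) :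
    FseqR k z - FseqR k (fun j => if j = p then z (p + 1) else if j = p + 1 then z p else z j)
      = (z (p + 1) - z p) *
        ((∑ j ∈ Finset.range p, z j) - (∑ j ∈ Finset.Ico (p + 2) k, z j)) := by
  set w : ℕ → ℝ := fun j => if j = p then z (p + 1) else if j = p + 1 then z p else z j with hw
  unfold FseqR
  rw [← Finset.sum_sub_distrib]
  rw [Finset.sum_eq_single p]
  · -- main term at i = p
    have h1 : ∑ j ∈ Finset.range (p + 1), z j = (∑ j ∈ Finset.range p, z j) + z p :=
      Finset.sum_range_succ z p
    have h2 : ∑ j ∈ Finset.range (p + 1), w j = (∑ j ∈ Finset.range p, z j) + z (p + 1) := by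
      rw [Finset.sum_range_succ]
      congr 1
      · exact Finset.sum_congr rfl fun j hj => by
          simp at hj; simp [hw, Nat.ne_of_lt hj, Nat.ne_of_lt (Nat.lt_succ_of_lt hj)]
      · simp [hw]
    have h3 : ∑ j ∈ Finset.Ico (p + 1) k, z j = z (p + 1) + ∑ j ∈ Finset.Ico (p + 2) k, z j :=
      Finset.sum_eq_sum_Ico_succ_bot hp z
    have h4 : ∑ j ∈ Finset.Ico (p + 1) k, w j = z p + ∑ j ∈ Finset.Ico (p + 2) k, z j := by
      rw [Finset.sum_eq_sum_Ico_succ_bot hp w]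
      congr 1
      · simp [hw]
      · exact Finset.sum_congr rfl fun j hj => by
          simp at hj
          have hj1 : j ≠ p + 1 := by omega
          have hj2 : j ≠ p := by omega
          simp [hw, hj1, hj2]
    rw [h1, h2, h3, h4]
    ring
  · -- other terms vanish
    intro i hi hip
    simp only [Finset.mem_range] at hi
    rcases Nat.lt_or_ge i p with h | h
    · have e1 : ∑ j ∈ Finset.range (i + 1), w j = ∑ j ∈ Finset.range (i + 1), z j := by
        apply swap_sum_eq
        simp [Finset.mem_range]; omega
      have e2 : ∑ j ∈ Finset.Ico (i + 1) k, w j = ∑ j ∈ Finset.Ico (i + 1) k, z j := by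
        apply swap_sum_eq
        simp [Finset.mem_Ico]; omega
      rw [e1, e2]; ring
    · have h' : p < i := lt_of_le_of_ne h (Ne.symm hip)
      have e1 : ∑ j ∈ Finset.range (i + 1), w j = ∑ j ∈ Finset.range (i + 1), z j := by
        apply swap_sum_eq
        simp [Finset.mem_range]; omega
      have e2 : ∑ j ∈ Finset.Ico (i + 1) k, w j = ∑ j ∈ Finset.Ico (i + 1) k, z j := by
        apply swap_sum_eq
        simp [Finset.mem_Ico]; omega
      rw [e1, e2]; ring
  · intro h
    exfalso; apply h
    simp [Finset.mem_range]; omega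
end
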